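/- Let 𝒢 be an undirected, mutant-biased fitness graph and define the potential Φ(X)=Σ_{u∈X} m(u)/d(u) for configurations X⊆V. Then Φ is a submartingale for the Heterogeneous Moran process: for every configuration X⊆V, the expected value of Φ after one transition step from X is at least Φ(X). Moreover, the expected one-step change equals Σ_{(u,v)∈E, u∈X, v∉X} m(u)·(m(v)−r(v)) / (d(u)·d(v)·F_X), which is nonnegative. -/

import Mathlib

open Finset
open scoped Classical

/-- A fitness graph: a finite strongly connected weighted directed graph together with
mutant and resident fitness functions. `w u v > 0` encodes that `(u,v)` is an edge
of non-zero weight; `w u ·` is a probability distribution. -/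
structure FitnessGraph (V : Type) [Fintype V] [DecidableEq V] where
  w : V → V → ℝ
  m : V → ℝ
  r : V → ℝ
  w_nonneg : ∀ u v, 0 ≤ w u v
  w_rowsum : ∀ u, ∑ v, w u v = 1
  strongly_connected : ∀ u v : V, Relation.ReflTransGen (fun a b => 0 < w a b) u v
  m_pos : ∀ u, 0 < m u
  r_pos : ∀ u, 0 < r u

variable {V : Type} [Fintype V] [DecidableEq V]

/-- A fitness graph is mutant-biased if `m(u) ≥ r(u)` for every node `u`. -/
def FitnessGraph.MutantBiased (G : FitnessGraph V) : Prop :=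
  ∀ u, G.r u ≤ G.m u

/-- The (out-)degree of a node: the number of neighbors along edges of non-zero weight. -/
noncomputable def FitnessGraph.deg (G : FitnessGraph V) (u : V) : ℕ :=
  (Finset.univ.filter fun v => 0 < G.w u v).card

/-- A fitness graph is undirected if its edge relation is symmetric and the weights
are uniform: `w(u,v) = 1/d(u)` for every edge `(u,v)`. -/
def FitnessGraph.Undirected (G : FitnessGraph V) : Prop :=
  (∀ u v, 0 < G.w u v → 0 < G.w v u) ∧
  ∀ u v, 0 < G.w u v → G.w u v = 1 / (G.deg u : ℝ)

/-- The fitness of node `u` in configuration `X`: `m(u)` if `u` is a mutant, `r(u)` otherwise. -/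
def FitnessGraph.fit (G : FitnessGraph V) (X : Finset V) (u : V) : ℝ :=
  if u ∈ X then G.m u else G.r u

/-- Total population fitness in configuration `X`. -/
def FitnessGraph.totalFit (G : FitnessGraph V) (X : Finset V) : ℝ :=
  ∑ u, G.fit X u

/-- The configuration resulting from `X` when `u` reproduces and replaces `v`. -/
def moranNext (X : Finset V) (u v : V) : Finset V :=
  if u ∈ X then insert v X else X.erase v

/-- One-step transition probability of the Heterogeneous Moran process. -/
noncomputable def FitnessGraph.step (G : FitnessGraph V) (X Y : Finset V) : ℝ :=
  ∑ u, ∑ v, (G.fit X u / G.totalFit X) * G.w u v * (if moranNext X u v = Y then 1 else 0)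

/-- `t`-step transition probability of the Heterogeneous Moran process. -/
noncomputable def FitnessGraph.stepN (G : FitnessGraph V) : ℕ → Finset V → Finset V → ℝ
  | 0, X, Y => if X = Y then 1 else 0
  | t + 1, X, Y => ∑ Z, FitnessGraph.stepN G t X Z * G.step Z Y

/-- Fixation probability: the probability that, started from seed set `S`, the process
eventually reaches the all-mutant configuration `V`; since `V` is absorbing this equals
`⨆ t, P(X_t = V)`. -/
noncomputable def FitnessGraph.fp (G : FitnessGraph V) (S : Finset V) : ℝ :=
  ⨆ t : ℕ, G.stepN t S Finset.univ

/-- The potential function `Φ(X) = ∑_{u ∈ X} m(u)/d(u)`. -/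
noncomputable def FitnessGraph.potential (G : FitnessGraph V) (X : Finset V) : ℝ :=
  ∑ u ∈ X, G.m u / (G.deg u : ℝ)

/-- The expected value of the potential after one transition step of the Heterogeneous
Moran process from configuration `X`. -/
noncomputable def FitnessGraph.expPotentialNext (G : FitnessGraph V) (X : Finset V) : ℝ :=
  ∑ u, ∑ v, (G.fit X u / G.totalFit X) * G.w u v * G.potential (moranNext X u v)

/-!
Because the transition probabilities from `X` sum to one, the expected change of `Φ` is
`∑ p(u,v) (Φ(X') - Φ(X))`, and only boundary edges contribute: a mutant `u ∈ X` replacing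
`v ∉ X` gains `m(v)/d(v)`, a resident `v ∉ X` replacing `u ∈ X` loses `m(u)/d(u)`. On an
undirected graph `w(u,v) = 1/d(u)` and `w(v,u) = 1/d(v)`, so the two orientations of a
boundary edge together contribute `m(u)(m(v) - r(v))/(d(u) d(v) F_X)`, which is nonnegative
when the graph is mutant-biased.
-/

lemma Finset.sum_sum_ite_mem_and_notMem {ι M : Type*} [Fintype ι] [DecidableEq ι]
    [AddCommMonoid M] (s : Finset ι) (f : ι → ι → M) :
    ∑ i, ∑ j, (if i ∈ s ∧ j ∉ s then f i j else 0) = ∑ i ∈ s, ∑ j ∈ sᶜ, f i j := by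
  simp only [ite_and, ← mem_compl, sum_ite_irrel, sum_const_zero, sum_ite_mem, univ_inter]

namespace FitnessGraph

variable (G : FitnessGraph V)

lemma fit_pos (X : Finset V) (u : V) : 0 < G.fit X u := by
  unfold fit
  split
  · exact G.m_pos u
  · exact G.r_pos u

lemma totalFit_pos [Nonempty V] (X : Finset V) : 0 < G.totalFit X :=
  sum_pos (fun u _ => G.fit_pos X u) univ_nonempty

lemma deg_pos_of_w_pos {u v : V} (h : 0 < G.w u v) : (0 : ℝ) < G.deg u := by
  have hv : v ∈ univ.filter (fun x => 0 < G.w u x) := by simp [h]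
  exact_mod_cast card_pos.2 ⟨v, hv⟩

lemma sum_sum_transition_eq_one [Nonempty V] (X : Finset V) :
    ∑ u, ∑ v, G.fit X u / G.totalFit X * G.w u v = 1 := by
  simp_rw [← mul_sum, w_rowsum, mul_one, ← sum_div]
  exact div_self (G.totalFit_pos X).ne'

lemma potential_moranNext_sub (X : Finset V) (u v : V) :
    G.potential (moranNext X u v) - G.potential X =
      (if u ∈ X ∧ v ∉ X then G.m v / G.deg v else 0) -
        (if u ∉ X ∧ v ∈ X then G.m v / G.deg v else 0) := by
  unfold moranNext potential
  by_cases hu : u ∈ X <;> by_cases hv : v ∈ X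
  · simp [hu, hv]
  · simp [hu, hv, sum_insert hv]
  · simp [hu, hv, sum_erase_eq_sub hv]
  · simp [hu, hv]

lemma expPotentialNext_sub_potential [Nonempty V] (X : Finset V) :
    G.expPotentialNext X - G.potential X =
      (∑ u ∈ X, ∑ v ∈ Xᶜ,
        (G.m u * G.w u v * (G.m v / G.deg v) - G.r v * G.w v u * (G.m u / G.deg u))) /
        G.totalFit X := by
  have hdrift : G.expPotentialNext X - G.potential X =
      ∑ u, ∑ v, G.fit X u / G.totalFit X * G.w u v *
        (G.potential (moranNext X u v) - G.potential X) := by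
    simp_rw [mul_sub, sum_sub_distrib, ← sum_mul, sum_sum_transition_eq_one, one_mul]
    rfl
  simp_rw [hdrift, potential_moranNext_sub, mul_sub, mul_ite, mul_zero, sum_sub_distrib]
  rw [sum_comm (f := fun u v => if u ∉ X ∧ v ∈ X then _ else _)]
  simp_rw [and_comm (a := _ ∉ X), sum_sum_ite_mem_and_notMem, ← sum_sub_distrib, sum_div]
  refine sum_congr rfl fun u hu => sum_congr rfl fun v hv => ?_
  simp only [fit, hu, mem_compl.1 hv, if_true, if_false]
  ring

variable {G}

lemma Undirected.cross_term_eq (hund : G.Undirected) (u v : V) :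
    G.m u * G.w u v * (G.m v / G.deg v) - G.r v * G.w v u * (G.m u / G.deg u) =
      if 0 < G.w u v then G.m u * (G.m v - G.r v) / (G.deg u * G.deg v) else 0 := by
  by_cases huv : 0 < G.w u v
  · have hvu : 0 < G.w v u := hund.1 u v huv
    have hdu := (G.deg_pos_of_w_pos huv).ne'
    have hdv := (G.deg_pos_of_w_pos hvu).ne'
    rw [if_pos huv, hund.2 u v huv, hund.2 v u hvu]
    field_simp
  · have hvu : ¬ 0 < G.w v u := fun h => huv (hund.1 v u h)
    simp [le_antisymm (not_lt.1 huv) (G.w_nonneg u v), le_antisymm (not_lt.1 hvu) (G.w_nonneg v u)]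

lemma Undirected.expPotentialNext_sub_potential_eq [Nonempty V] (hund : G.Undirected)
    (X : Finset V) :
    G.expPotentialNext X - G.potential X =
      ∑ u ∈ X, ∑ v ∈ univ.filter (fun v => 0 < G.w u v ∧ v ∉ X),
        G.m u * (G.m v - G.r v) / (G.deg u * G.deg v * G.totalFit X) := by
  rw [G.expPotentialNext_sub_potential, sum_div]
  refine sum_congr rfl fun u _ => ?_
  have hedges : univ.filter (fun v => 0 < G.w u v ∧ v ∉ X) = Xᶜ.filter (0 < G.w u ·) := by
    ext v; simp [and_comm]
  simp_rw [hedges, sum_filter, sum_div, hund.cross_term_eq, ite_div, zero_div, div_div]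

lemma MutantBiased.sum_boundary_nonneg (hbias : G.MutantBiased) (X : Finset V) (E : V → Finset V) :
    0 ≤ ∑ u ∈ X, ∑ v ∈ E u, G.m u * (G.m v - G.r v) / (G.deg u * G.deg v * G.totalFit X) :=
  sum_nonneg fun u _ => sum_nonneg fun v _ =>
    div_nonneg (mul_nonneg (G.m_pos u).le (sub_nonneg.2 (hbias v)))
      (mul_nonneg (by positivity) (sum_nonneg fun x _ => (G.fit_pos X x).le))

end FitnessGraph

/-- On an undirected mutant-biased fitness graph, the potential `Φ` is a submartingale
for the Heterogeneous Moran process, and the expected one-step change from `X` equals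
`∑_{(u,v)∈E, u∈X, v∉X} m(u)(m(v)−r(v))/(d(u)d(v)F_X)`, which is nonnegative. -/
theorem potential_submartingale [Nonempty V] (G : FitnessGraph V)
    (hund : G.Undirected) (hbias : G.MutantBiased) :
    ∀ X : Finset V,
      G.potential X ≤ G.expPotentialNext X ∧
      G.expPotentialNext X - G.potential X =
        ∑ u ∈ X, ∑ v ∈ Finset.univ.filter (fun v => 0 < G.w u v ∧ v ∉ X),
          G.m u * (G.m v - G.r v) / ((G.deg u : ℝ) * (G.deg v : ℝ) * G.totalFit X) ∧
      0 ≤ ∑ u ∈ X, ∑ v ∈ Finset.univ.filter (fun v => 0 < G.w u v ∧ v ∉ X),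
          G.m u * (G.m v - G.r v) / ((G.deg u : ℝ) * (G.deg v : ℝ) * G.totalFit X) := by
  intro X
  have hflux := hund.expPotentialNext_sub_potential_eq X
  have hnonneg := hbias.sum_boundary_nonneg X fun u => univ.filter (fun v => 0 < G.w u v ∧ v ∉ X)
  exact ⟨by linarith, hflux, hnonneg⟩
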